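/- arXiv:2307.06016 — 7 statements merged into one kernel-verified Lean document; each statement's English description precedes it below -/
import Mathlib

section
/- A quantitative property Φ : Σ^ω → D into a complete lattice D is safe if and only if Φ equals its safety closure, i.e., Φ(w) = inf over finite prefixes u of w of sup over w' ∈ Σ^ω of Φ(u·w'), for every infinite word w. -/
/-- Concatenation of a finite word `u` with an infinite word `w`. -/
def wordCat {A : Type*} (u : List A) (w : ℕ → A) : ℕ → A :=
  fun i => if h : i < u.length then u.get ⟨i, h⟩ else w (i - u.length)

/-- The finite prefix of length `n` of an infinite word `w`. -/
def wordPre {A : Type*} (w : ℕ → A) (n : ℕ) : List A :=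
  List.ofFn (fun i : Fin n => w i)

/-- The safety closure of a quantitative property:
`Φ*(w) = inf over finite prefixes u of w of sup over w' of Φ(u·w')`. -/
noncomputable def SafetyClosure {A D : Type*} [CompleteLattice D]
    (Φ : (ℕ → A) → D) (w : ℕ → A) : D :=
  ⨅ n : ℕ, ⨆ w' : ℕ → A, Φ (wordCat (wordPre w n) w')

/-- A quantitative property is safe when every wrong lower-bound hypothesis
has a finite prefix witnessing the violation. -/
def QuantSafe {A D : Type*} [CompleteLattice D] (Φ : (ℕ → A) → D) : Prop :=
  ∀ (w : ℕ → A) (v : D), ¬ v ≤ Φ w →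
    ∃ n : ℕ, ¬ v ≤ ⨆ w' : ℕ → A, Φ (wordCat (wordPre w n) w')

/-- A quantitative property into a complete lattice is safe iff it equals its
safety closure. -/
theorem safe_iff_eq_safetyClosure {A D : Type*} [Finite A] [Nonempty A]
    [CompleteLattice D] (Φ : (ℕ → A) → D) :
    QuantSafe Φ ↔ ∀ w : ℕ → A, Φ w = SafetyClosure Φ w := by
  have hcat : ∀ (w : ℕ → A) (n : ℕ), wordCat (wordPre w n) (fun i => w (n + i)) = w := by
    intro w n
    funext i
    simp only [wordCat, wordPre, List.length_ofFn]
    split_ifs with h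
    · simp
    · congr 1
      omega
  have hle : ∀ w : ℕ → A, Φ w ≤ SafetyClosure Φ w := by
    intro w
    refine le_iInf fun n => ?_
    have := le_iSup (fun w' => Φ (wordCat (wordPre w n) w')) (fun i => w (n + i))
    rwa [hcat] at this
  constructor
  · intro hs w
    refine le_antisymm (hle w) ?_
    by_contra h
    obtain ⟨n, hn⟩ := hs w (SafetyClosure Φ w) h
    exact hn (iInf_le _ n)
  · intro h w v hv
    rw [h w, SafetyClosure] at hv
    by_contra hc
    push_neg at hc
    exact hv (le_iInf hc)
end

section
/- There exists a partially-ordered complete lattice D and a quantitative property Φ : Σ^ω → D that is threshold safe but not safe. Concretely, let D = [0,1] ∪ {x} where 0 < x < 1 and x is incomparable to all elements of (0,1), Σ = {a,b}, and Φ(w) = x if w = a^ω, Φ(w) = 2^{-|w|_a} if w ∈ Σ*b^ω, and Φ(w) = 0 otherwise; then Φ is threshold safe but not safe. -/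
/-- A boolean safety property. -/
def BoolSafety {A : Type*} (P : Set (ℕ → A)) : Prop :=
  ∀ w : ℕ → A, w ∉ P → ∃ n : ℕ, ∀ w' : ℕ → A, wordCat (wordPre w n) w' ∉ P

/-- A quantitative property is threshold safe when for every value `v` the set
of words with value at least `v` is a boolean safety property. -/
def ThresholdSafe {A D : Type*} [CompleteLattice D] (Φ : (ℕ → A) → D) : Prop :=
  ∀ v : D, BoolSafety {w : ℕ → A | v ≤ Φ w}

namespace TSNS

lemma wordCat_pre {A : Type*} (w w' : ℕ → A) (n i : ℕ) (h : i < n) :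
    wordCat (wordPre w n) w' i = w i := by
  simp [wordCat, wordPre, h]

def F : Set (Set ℕ) := {s | s = ∅ ∨ s = {0} ∨ ∃ n, s = Set.Ici n}

lemma F_sInter {G : Set (Set ℕ)} (hG : G ⊆ F) : ⋂₀ G ∈ F := by
  classical
  by_cases h0 : ∅ ∈ G
  · left
    exact subset_antisymm (Set.sInter_subset_of_mem h0) (Set.empty_subset _)
  set I : Set ℕ := {n | Set.Ici n ∈ G} with hI
  by_cases hx : ({0} : Set ℕ) ∈ G
  · by_cases h1 : ∃ n ∈ I, 1 ≤ n
    · left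
      obtain ⟨n, hn, hn1⟩ := h1
      apply subset_antisymm _ (Set.empty_subset _)
      intro m hm
      have hm0 : m ∈ ({0} : Set ℕ) := hm _ hx
      have hmn : m ∈ Set.Ici n := hm _ hn
      simp only [Set.mem_singleton_iff] at hm0
      subst hm0
      exact absurd (le_trans hn1 hmn) (by norm_num)
    · right; left
      apply subset_antisymm (Set.sInter_subset_of_mem hx)
      intro m hm s hs
      rcases hG hs with rfl | rfl | ⟨n, rfl⟩
      · exact absurd hs h0
      · exact hm
      · have : n = 0 := by
          by_contra hne
          exact h1 ⟨n, hs, Nat.one_le_iff_ne_zero.mpr hne⟩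
        subst this
        exact Nat.zero_le _
  · have hG' : ∀ s ∈ G, ∃ n ∈ I, s = Set.Ici n := by
      intro s hs
      rcases hG hs with rfl | rfl | ⟨n, rfl⟩
      · exact absurd hs h0
      · exact absurd hs hx
      · exact ⟨n, hs, rfl⟩
    by_cases hb : BddAbove I
    · rcases Set.eq_empty_or_nonempty I with hIe | hIne
      · right; right
        refine ⟨0, ?_⟩
        apply subset_antisymm (fun m _ => Nat.zero_le m)
        intro m _ s hs
        obtain ⟨n, hn, rfl⟩ := hG' s hs
        exact absurd (Set.eq_empty_iff_forall_notMem.mp hIe n) (by simp [hn])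
      · right; right
        refine ⟨sSup I, ?_⟩
        ext m
        simp only [Set.mem_sInter, Set.mem_Ici]
        constructor
        · intro hm
          exact csSup_le hIne (fun n hn => hm _ hn)
        · intro hm s hs
          obtain ⟨n, hn, rfl⟩ := hG' s hs
          exact le_trans (le_csSup hb hn) hm
    · left
      apply subset_antisymm _ (Set.empty_subset _)
      intro m hm
      exact absurd ⟨m, fun n hn => hm _ hn⟩ hb

def D : Type := {s : Set ℕ // s ∈ F}

instance : PartialOrder D := Subtype.partialOrder _

noncomputable instance : InfSet D :=
  ⟨fun S => ⟨⋂₀ (Subtype.val '' S), F_sInter (by rintro s ⟨t, _, rfl⟩; exact t.2)⟩⟩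

lemma D_le_iff {a b : D} : a ≤ b ↔ a.1 ⊆ b.1 := Iff.rfl

noncomputable instance : CompleteLattice D :=
  completeLatticeOfInf D (by
    intro S
    constructor
    · intro t ht
      exact Set.sInter_subset_of_mem ⟨t, ht, rfl⟩
    · intro b hb
      refine Set.subset_sInter ?_
      rintro s ⟨t, ht, rfl⟩
      exact hb ht)

open Classical in
noncomputable def Phi (w : ℕ → Bool) : D :=
  if w = fun _ => true then ⟨{0}, Or.inr (Or.inl rfl)⟩
  else if h : {i | w i = true}.Finite then
    ⟨Set.Ici h.toFinset.card, Or.inr (Or.inr ⟨_, rfl⟩)⟩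
  else ⟨∅, Or.inl rfl⟩

lemma Phi_const_true : Phi (fun _ => true) = ⟨{0}, Or.inr (Or.inl rfl)⟩ := by
  simp [Phi]; rfl

lemma Phi_finite (w : ℕ → Bool) (hne : w ≠ fun _ => true) (h : {i | w i = true}.Finite) :
    Phi w = ⟨Set.Ici h.toFinset.card, Or.inr (Or.inr ⟨_, rfl⟩)⟩ := by
  simp [Phi, hne, h]; rfl

lemma Phi_infinite (w : ℕ → Bool) (hne : w ≠ fun _ => true)
    (h : ¬ {i | w i = true}.Finite) :
    Phi w = ⟨∅, Or.inl rfl⟩ := by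
  simp [Phi, hne, h]; rfl

lemma phi_thresholdSafe : ThresholdSafe Phi := by
  intro v w hw
  simp only [Set.mem_setOf_eq] at hw
  rcases v.2 with hv | hv | ⟨k, hv⟩
  · -- v = ∅ : impossible
    exact absurd (D_le_iff.mpr (by rw [hv]; exact Set.empty_subset _)) hw
  · -- v = {0}
    have hwt : w ≠ fun _ => true := by
      rintro rfl
      exact hw (D_le_iff.mpr (by rw [hv, Phi_const_true]))
    have hi : ∃ i, w i = true := by
      by_contra h'
      push_neg at h'
      have hemp : {i | w i = true} = ∅ := Set.eq_empty_iff_forall_notMem.mpr h'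
      have hf : {i | w i = true}.Finite := by rw [hemp]; exact Set.finite_empty
      apply hw
      rw [Phi_finite w hwt hf]
      refine D_le_iff.mpr ?_
      rw [hv]
      intro m hm
      simp only [Set.mem_singleton_iff] at hm
      subst hm
      have : hf.toFinset.card = 0 := by
        rw [Finset.card_eq_zero, Set.Finite.toFinset_eq_empty]
        exact hemp
      simp [this]
    obtain ⟨i, hi⟩ := hi
    obtain ⟨j, hj⟩ : ∃ j, w j = false := by
      by_contra h'
      push_neg at h'
      exact hwt (funext fun j => by
        cases hwj : w j
        · exact absurd hwj (h' j)
        · rfl)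
    refine ⟨max i j + 1, fun w' hmem => ?_⟩
    simp only [Set.mem_setOf_eq] at hmem
    set u := wordCat (wordPre w (max i j + 1)) w' with hu
    have hui : u i = true := by
      rw [hu, wordCat_pre _ _ _ _ (Nat.lt_succ_of_le (le_max_left i j))]; exact hi
    have huj : u j = false := by
      rw [hu, wordCat_pre _ _ _ _ (Nat.lt_succ_of_le (le_max_right i j))]; exact hj
    have hut : u ≠ fun _ => true := by
      intro h'
      rw [congrFun h' j] at huj
      exact Bool.noConfusion huj
    have h0 : (0 : ℕ) ∈ (Phi u).1 := D_le_iff.mp hmem (by rw [hv]; rfl)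
    by_cases hf : {m | u m = true}.Finite
    · rw [Phi_finite u hut hf] at h0
      have hi' : i ∈ hf.toFinset := by
        rw [Set.Finite.mem_toFinset]; exact hui
      have : 1 ≤ hf.toFinset.card := Finset.card_pos.mpr ⟨i, hi'⟩
      simp only [Set.mem_Ici] at h0
      omega
    · rw [Phi_infinite u hut hf] at h0
      exact h0
  · -- v = Ici k
    obtain ⟨t, hts, htc⟩ :
        ∃ t : Finset ℕ, (↑t : Set ℕ) ⊆ {i | w i = true} ∧ t.card = k + 1 := by
      by_cases hf : {i | w i = true}.Finite
      · have hwt : w ≠ fun _ => true := by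
          rintro rfl
          simp only [Set.setOf_true] at hf
          exact Set.infinite_univ hf
        have hcard : k + 1 ≤ hf.toFinset.card := by
          by_contra h'
          push_neg at h'
          apply hw
          rw [Phi_finite w hwt hf]
          refine D_le_iff.mpr ?_
          rw [hv]
          exact Set.Ici_subset_Ici.mpr (by omega)
        obtain ⟨t, hts, htc⟩ := Finset.exists_subset_card_eq hcard
        exact ⟨t, fun i hi => (Set.Finite.mem_toFinset hf).mp (hts hi), htc⟩
      · exact Set.Infinite.exists_subset_card_eq hf (k + 1)
    refine ⟨t.sup id + 1, fun w' hmem => ?_⟩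
    simp only [Set.mem_setOf_eq] at hmem
    set u := wordCat (wordPre w (t.sup id + 1)) w' with hu
    have hut : ∀ i ∈ t, u i = true := by
      intro i hi
      have hile : i ≤ t.sup id := Finset.le_sup (f := id) hi
      rw [hu, wordCat_pre _ _ _ _ (Nat.lt_succ_of_le hile)]
      exact hts hi
    have hk : k ∈ v.1 := by rw [hv]; exact Set.self_mem_Ici
    by_cases hut' : u = fun _ => true
    · rw [hut', Phi_const_true] at hmem
      have h1 : k + 1 ∈ v.1 := by rw [hv]; exact Nat.le_succ k
      have := D_le_iff.mp hmem h1
      simp at this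
    by_cases hf : {m | u m = true}.Finite
    · rw [Phi_finite u hut' hf] at hmem
      have hsub : t ⊆ hf.toFinset := fun i hi => (Set.Finite.mem_toFinset hf).mpr (hut i hi)
      have hcard : k + 1 ≤ hf.toFinset.card := htc ▸ Finset.card_le_card hsub
      have := D_le_iff.mp hmem hk
      simp only [Set.mem_Ici] at this
      omega
    · rw [Phi_infinite u hut' hf] at hmem
      exact D_le_iff.mp hmem hk

lemma phi_not_safe : ¬ QuantSafe Phi := by
  intro h
  have hvF : (Set.Ici 0 : Set ℕ) ∈ F := Or.inr (Or.inr ⟨0, rfl⟩)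
  set v : D := ⟨Set.Ici 0, hvF⟩ with hvdef
  have hne : ¬ v ≤ Phi (fun _ => true) := by
    rw [Phi_const_true]
    intro hle
    have := D_le_iff.mp hle (show (1 : ℕ) ∈ Set.Ici 0 from Nat.zero_le 1)
    simp at this
  obtain ⟨n, hn⟩ := h (fun _ => true) v hne
  apply hn
  set u := ⨆ w', Phi (wordCat (wordPre (fun _ => true) n) w') with hudef
  have hcat1 : wordCat (wordPre (fun _ => true) n) (fun _ => true) = fun _ => true := by
    funext i
    by_cases h' : i < n
    · rw [wordCat_pre _ _ _ _ h']
    · simp [wordCat, wordPre, h']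
  have h1 : Phi (fun _ => true) ≤ u := by
    rw [← hcat1]
    exact le_iSup (fun w' => Phi (wordCat (wordPre (fun _ => true) n) w')) (fun _ => true)
  have h0 : (0 : ℕ) ∈ u.1 := by
    refine D_le_iff.mp h1 ?_
    rw [Phi_const_true]
    rfl
  set w2 : ℕ → Bool := fun i => decide (i < n) with hw2def
  have hcat2 : wordCat (wordPre (fun _ => true) n) (fun _ => false) = w2 := by
    funext i
    by_cases h' : i < n
    · rw [wordCat_pre _ _ _ _ h']
      simp [hw2def, h']
    · simp [wordCat, wordPre, h', hw2def]
  have hw2ne : w2 ≠ fun _ => true := by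
    intro h'
    have := congrFun h' n
    simp [hw2def] at this
  have hw2f : {i | w2 i = true}.Finite := by
    apply Set.Finite.subset (Set.finite_Iio n)
    intro i hi
    simp only [Set.mem_setOf_eq, hw2def, decide_eq_true_eq] at hi
    exact hi
  have h2 : Phi w2 ≤ u := by
    rw [← hcat2]
    exact le_iSup (fun w' => Phi (wordCat (wordPre (fun _ => true) n) w')) (fun _ => false)
  rw [Phi_finite w2 hw2ne hw2f] at h2
  have hc : Set.Ici hw2f.toFinset.card ⊆ u.1 := D_le_iff.mp h2
  rcases u.2 with hu | hu | ⟨m, hu⟩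
  · rw [hu] at h0
    exact absurd h0 (Set.notMem_empty 0)
  · exfalso
    have := hc (Set.mem_Ici.mpr (Nat.le_succ _))
    rw [hu] at this
    simp at this
  · have hm : m = 0 := by
      rw [hu] at h0
      exact Nat.le_zero.mp h0
    refine D_le_iff.mpr ?_
    rw [hu, hm]

end TSNS

/-- There is a partially-ordered complete lattice `D` (concretely, `[0,1] ∪ {x}`
with `x` incomparable to `(0,1)`) and a quantitative property over a two-letter
alphabet that is threshold safe but not safe. -/
theorem exists_thresholdSafe_not_safe :
    ∃ (D : Type) (instD : CompleteLattice D) (Φ : (ℕ → Bool) → D),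
      @ThresholdSafe Bool D instD Φ ∧ ¬ @QuantSafe Bool D instD Φ := by
  exact ⟨TSNS.D, inferInstance, TSNS.Phi, TSNS.phi_thresholdSafe, TSNS.phi_not_safe⟩
end

section
/- If a quantitative property Φ : Σ^ω → D is sup-closed, then for every threshold v ∈ D, the set {w | safety-closure of Φ at w is ≥ v} equals the topological closure in the Cantor space Σ^ω of the set {w | Φ(w) ≥ v}. -/
/-- A property is sup-closed when for every finite word the supremum over all
continuations is attained by some continuation. -/
def SupClosedProp {A D : Type*} [CompleteLattice D] (Φ : (ℕ → A) → D) : Prop :=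
  ∀ u : List A, ∃ w : ℕ → A, Φ (wordCat u w) = ⨆ w' : ℕ → A, Φ (wordCat u w')

lemma wordCat_pre_apply {A : Type*} (w : ℕ → A) (n : ℕ) (w' : ℕ → A) {i : ℕ}
    (hi : i < n) : wordCat (wordPre w n) w' i = w i := by
  simp [wordCat, wordPre, hi]

lemma wordCat_pre_shift {A : Type*} (w : ℕ → A) (n : ℕ) :
    wordCat (wordPre w n) (fun i => w (i + n)) = w := by
  funext i
  by_cases hi : i < n
  · exact wordCat_pre_apply w n _ hi
  · simp only [wordCat, wordPre, List.length_ofFn, dif_neg hi]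
    congr 1
    omega

lemma wordPre_congr {A : Type*} {x w : ℕ → A} {n : ℕ} (h : ∀ i < n, x i = w i) :
    wordPre x n = wordPre w n := by
  unfold wordPre
  congr 1
  funext i
  exact h i i.isLt

/-- For a sup-closed property, the set of words whose safety-closure value is
at least `v` equals the topological closure (in the Cantor space) of the set of
words whose value is at least `v`. -/
theorem safetyClosure_eq_topologicalClosure {A D : Type*} [Finite A] [Nonempty A]
    [TopologicalSpace A] [DiscreteTopology A] [CompleteLattice D]
    (Φ : (ℕ → A) → D) (hsup : SupClosedProp Φ) (v : D) :
    {w : ℕ → A | v ≤ SafetyClosure Φ w} = closure {w : ℕ → A | v ≤ Φ w} := by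
  ext w
  simp only [Set.mem_setOf_eq]
  constructor
  · intro h
    rw [(PiNat.isTopologicalBasis_cylinders (fun _ : ℕ => A)).mem_closure_iff]
    rintro o ⟨x, n, rfl⟩ hw
    obtain ⟨w', hw'⟩ := hsup (wordPre w n)
    refine ⟨wordCat (wordPre w n) w', ?_, ?_⟩
    · intro i hi
      rw [wordCat_pre_apply w n w' hi]
      exact hw i hi
    · show v ≤ Φ _
      rw [hw']
      exact h.trans (iInf_le _ n)
  · intro h
    refine le_iInf fun n => ?_
    obtain ⟨y, hy, hyS⟩ := (PiNat.isTopologicalBasis_cylinders (fun _ : ℕ => A)).mem_closure_iff.mp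
      h (PiNat.cylinder w n) ⟨w, n, rfl⟩ (PiNat.self_mem_cylinder w n)
    have hpre : wordPre y n = wordPre w n := wordPre_congr (fun i hi => hy i hi)
    calc v ≤ Φ y := hyS
      _ = Φ (wordCat (wordPre w n) (fun i => y (i + n))) := by
            rw [← hpre, wordCat_pre_shift]
      _ ≤ ⨆ w' : ℕ → A, Φ (wordCat (wordPre w n) w') := le_iSup (fun w' => Φ (wordCat (wordPre w n) w')) _
end

section
/- For a sup-closed quantitative property Φ : Σ^ω → D over a totally-ordered complete lattice whose greatest element ⊤ equals sup_w Φ(w), the following are equivalent: (1) Φ is live; (2) Φ is top live; (3) Φ is threshold live. -/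
/-- Liveness: each word of non-top value admits a wrong lower bound hypothesis
that no finite prefix can reject. -/
def QuantLive {A D : Type*} [CompleteLinearOrder D] (Φ : (ℕ → A) → D) : Prop :=
  ∀ w : ℕ → A, Φ w < ⊤ → ∃ v : D, ¬ v ≤ Φ w ∧
    ∀ n : ℕ, v ≤ ⨆ w' : ℕ → A, Φ (wordCat (wordPre w n) w')

/-- Top liveness: the safety closure is constantly the top value. -/
def TopLive {A D : Type*} [CompleteLattice D] (Φ : (ℕ → A) → D) : Prop :=
  ∀ w : ℕ → A, SafetyClosure Φ w = ⊤

/-- Threshold liveness: every value can be reached or exceeded after every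
finite prefix. -/
def ThresholdLive {A D : Type*} [CompleteLattice D] (Φ : (ℕ → A) → D) : Prop :=
  ∀ (v : D) (u : List A), ∃ w' : ℕ → A, v ≤ Φ (wordCat u w')

lemma wordPre_wordCat {A : Type*} (u : List A) (w : ℕ → A) :
    wordPre (wordCat u w) u.length = u := by
  apply List.ext_get
  · simp [wordPre]
  intro i h1 h2
  simp only [wordPre, List.get_eq_getElem, List.getElem_ofFn]
  simp only [wordPre, List.length_ofFn] at h1
  simp [wordCat, h1]

/-- For a sup-closed property over a totally-ordered complete lattice whose
greatest element is the supremum of the property values, liveness, top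
liveness, and threshold liveness coincide. -/
theorem live_iff_topLive_iff_thresholdLive {A D : Type*} [Finite A] [Nonempty A]
    [CompleteLinearOrder D] (Φ : (ℕ → A) → D)
    (hsup : SupClosedProp Φ) (htop : (⨆ w : ℕ → A, Φ w) = ⊤) :
    (QuantLive Φ ↔ TopLive Φ) ∧ (TopLive Φ ↔ ThresholdLive Φ) := by
  -- Threshold live → Top live
  have hTL : ThresholdLive Φ → TopLive Φ := by
    intro h w
    apply le_antisymm le_top
    apply le_iInf; intro n
    obtain ⟨w', hw'⟩ := h ⊤ (wordPre w n)
    exact le_trans hw' (le_iSup (fun w' => Φ (wordCat (wordPre w n) w')) w')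
  -- Top live → Quant live
  have hTQ : TopLive Φ → QuantLive Φ := by
    intro h w hw
    refine ⟨⊤, fun hle => (ne_of_lt hw) (le_antisymm hw.le hle), fun n => ?_⟩
    have := h w
    rw [SafetyClosure] at this
    calc ⊤ = ⨅ n : ℕ, ⨆ w' : ℕ → A, Φ (wordCat (wordPre w n) w') := this.symm
      _ ≤ _ := iInf_le _ n
  -- Quant live → Threshold live
  have hQT : QuantLive Φ → ThresholdLive Φ := by
    intro h v u
    by_contra hc
    push_neg at hc
    obtain ⟨w0, hw0⟩ := hsup u
    set s := ⨆ w' : ℕ → A, Φ (wordCat u w') with hs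
    have hsv : s < v := by
      rw [← hw0]
      exact hc w0
    have hst : Φ (wordCat u w0) < ⊤ := by
      rw [hw0]; exact lt_of_lt_of_le hsv le_top
    obtain ⟨v', hv'1, hv'2⟩ := h (wordCat u w0) hst
    have := hv'2 u.length
    rw [wordPre_wordCat] at this
    rw [hw0] at hv'1
    exact hv'1 this
  exact ⟨⟨fun h => hTL (hQT h), hTQ⟩, ⟨fun h => hQT (hTQ h), hTL⟩⟩
end

section
/- A value function Val : Q^ω → ℝ (restricted to sequences over a finite set V ⊂ ℚ) is discounting if and only if it is both safe and co-safe. Here discounting means: for every finite V ⊂ ℚ and ε > 0 there is n ∈ ℕ such that for every x ∈ V^n and y,y' ∈ V^ω, |Val(x·y) − Val(x·y')| < ε. -/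
/-- Concatenation of a finite sequence `u` with an infinite sequence `w`. -/
def seqCat {A : Type*} (u : List A) (w : ℕ → A) : ℕ → A :=
  fun i => if h : i < u.length then u.get ⟨i, h⟩ else w (i - u.length)

/-- The finite prefix of length `n` of an infinite sequence `w`. -/
def seqPre {A : Type*} (w : ℕ → A) (n : ℕ) : List A :=
  List.ofFn (fun i : Fin n => w i)

/-- A value function is discounting when for every finite set of weights and
every ε > 0 there is a prefix length after which all continuations give values
within ε of each other. -/
def DiscountingVal (Val : (ℕ → ℚ) → ℝ) : Prop :=
  ∀ V : Finset ℚ, ∀ ε : ℝ, 0 < ε → ∃ n : ℕ, ∀ z : List ℚ, z.length = n →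
    (∀ q ∈ z, q ∈ V) → ∀ y y' : ℕ → ℚ, (∀ i, y i ∈ V) → (∀ i, y' i ∈ V) →
      |Val (seqCat z y) - Val (seqCat z y')| < ε

/-- A value function is safe when every wrong strict upper bound on its value
is witnessed by some finite prefix. -/
def SafeVal (Val : (ℕ → ℚ) → ℝ) : Prop :=
  ∀ V : Finset ℚ, ∀ x : ℕ → ℚ, (∀ i, x i ∈ V) → ∀ v : ℝ, Val x < v →
    ∃ n : ℕ, sSup {r : ℝ | ∃ y : ℕ → ℚ, (∀ i, y i ∈ V) ∧
      r = Val (seqCat (seqPre x n) y)} < v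

/-- A value function is co-safe when every wrong strict lower bound on its
value is witnessed by some finite prefix. -/
def CosafeVal (Val : (ℕ → ℚ) → ℝ) : Prop :=
  ∀ V : Finset ℚ, ∀ x : ℕ → ℚ, (∀ i, x i ∈ V) → ∀ v : ℝ, v < Val x →
    ∃ n : ℕ, v < sInf {r : ℝ | ∃ y : ℕ → ℚ, (∀ i, y i ∈ V) ∧
      r = Val (seqCat (seqPre x n) y)}

lemma seqCat_lt {A : Type*} (u : List A) (w : ℕ → A) {i : ℕ} (h : i < u.length) :
    seqCat u w i = u[i] := dif_pos h

lemma seqCat_ge {A : Type*} (u : List A) (w : ℕ → A) {i : ℕ} (h : u.length ≤ i) :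
    seqCat u w i = w (i - u.length) := dif_neg (not_lt.2 h)

lemma seqCat_append {A : Type*} (u v : List A) (w : ℕ → A) :
    seqCat (u ++ v) w = seqCat u (seqCat v w) := by
  funext i
  by_cases h1 : i < u.length
  · rw [seqCat_lt _ _ (by simp; omega), seqCat_lt _ _ h1, List.getElem_append_left]
  · push_neg at h1
    by_cases h2 : i < u.length + v.length
    · rw [seqCat_lt _ _ (by simp; omega), seqCat_ge _ _ h1, seqCat_lt _ _ (by omega),
        List.getElem_append_right h1]
    · rw [seqCat_ge _ _ (by simp; omega), seqCat_ge _ _ h1, seqCat_ge _ _ (by omega),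
        Nat.sub_sub, List.length_append]

@[simp] lemma seqPre_length {A : Type*} (w : ℕ → A) (n : ℕ) : (seqPre w n).length = n :=
  List.length_ofFn

lemma seqPre_getElem {A : Type*} (w : ℕ → A) {n i : ℕ} (h : i < (seqPre w n).length) :
    (seqPre w n)[i] = w i := by
  simp [seqPre]

lemma seqCat_seqPre {A : Type*} (x : ℕ → A) (n : ℕ) :
    seqCat (seqPre x n) (fun i => x (i + n)) = x := by
  funext i
  by_cases h : i < n
  · rw [seqCat_lt _ _ (by simpa using h), seqPre_getElem]
  · rw [seqCat_ge _ _ (by simpa using not_lt.1 h)]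
    simp
    congr 1
    omega

lemma seqPre_mem {A : Type*} {w : ℕ → A} {n : ℕ} {q : A} (h : q ∈ seqPre w n) :
    ∃ i, w i = q := by
  obtain ⟨i, hi⟩ := List.mem_ofFn.1 h
  exact ⟨i, hi⟩

lemma take_seqPre {A : Type*} (w : ℕ → A) {m n : ℕ} (h : m ≤ n) :
    (seqPre w n).take m = seqPre w m := by
  apply List.ext_getElem
  · simp; omega
  · intro i h1 h2
    rw [List.getElem_take, seqPre_getElem, seqPre_getElem]

lemma seqCat_mem {V : Finset ℚ} {z : List ℚ} (hz : ∀ q ∈ z, q ∈ V) {y : ℕ → ℚ}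
    (hy : ∀ i, y i ∈ V) : ∀ i, seqCat z y i ∈ V := by
  intro i
  by_cases h : i < z.length
  · rw [seqCat_lt _ _ h]; exact hz _ (List.getElem_mem h)
  · rw [seqCat_ge _ _ (not_lt.1 h)]; exact hy _

lemma seqCat_split {A : Type*} (z : List A) {k : ℕ} (_ : k ≤ z.length) (w : ℕ → A) :
    seqCat z w = seqCat (z.take k) (seqCat (z.drop k) w) := by
  conv_lhs => rw [← List.take_append_drop k z]
  exact seqCat_append _ _ _

lemma mp_safe {Val : (ℕ → ℚ) → ℝ} (hd : DiscountingVal Val) : SafeVal Val := by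
  intro V x hx v hv
  obtain ⟨n, hn⟩ := hd V ((v - Val x) / 2) (by linarith)
  refine ⟨n, ?_⟩
  have hpre : ∀ q ∈ seqPre x n, q ∈ V := by
    intro q hq; obtain ⟨i, hi⟩ := seqPre_mem hq; exact hi ▸ hx i
  have hub : ∀ r ∈ {r : ℝ | ∃ y : ℕ → ℚ, (∀ i, y i ∈ V) ∧
      r = Val (seqCat (seqPre x n) y)}, r ≤ Val x + (v - Val x) / 2 := by
    rintro r ⟨yy, hyy, rfl⟩
    have h := hn (seqPre x n) (seqPre_length x n) hpre yy (fun i => x (i + n)) hyy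
      (fun i => hx _)
    rw [seqCat_seqPre] at h
    have := (abs_sub_lt_iff.1 h).1
    linarith
  have hne : {r : ℝ | ∃ y : ℕ → ℚ, (∀ i, y i ∈ V) ∧
      r = Val (seqCat (seqPre x n) y)}.Nonempty :=
    ⟨Val (seqCat (seqPre x n) fun i => x (i + n)), fun i => x (i + n),
      fun i => hx (i + n), rfl⟩
  calc sSup _ ≤ Val x + (v - Val x) / 2 := csSup_le hne hub
    _ < v := by linarith

lemma mp_cosafe {Val : (ℕ → ℚ) → ℝ} (hd : DiscountingVal Val) : CosafeVal Val := by
  intro V x hx v hv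
  obtain ⟨n, hn⟩ := hd V ((Val x - v) / 2) (by linarith)
  refine ⟨n, ?_⟩
  have hpre : ∀ q ∈ seqPre x n, q ∈ V := by
    intro q hq; obtain ⟨i, hi⟩ := seqPre_mem hq; exact hi ▸ hx i
  have hlb : ∀ r ∈ {r : ℝ | ∃ y : ℕ → ℚ, (∀ i, y i ∈ V) ∧
      r = Val (seqCat (seqPre x n) y)}, Val x - (Val x - v) / 2 ≤ r := by
    rintro r ⟨yy, hyy, rfl⟩
    have h := hn (seqPre x n) (seqPre_length x n) hpre yy (fun i => x (i + n)) hyy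
      (fun i => hx _)
    rw [seqCat_seqPre] at h
    have := (abs_sub_lt_iff.1 h).2
    linarith
  have hne : {r : ℝ | ∃ y : ℕ → ℚ, (∀ i, y i ∈ V) ∧
      r = Val (seqCat (seqPre x n) y)}.Nonempty :=
    ⟨Val (seqCat (seqPre x n) fun i => x (i + n)), fun i => x (i + n),
      fun i => hx (i + n), rfl⟩
  calc v < Val x - (Val x - v) / 2 := by linarith
    _ ≤ sInf _ := le_csInf hne hlb

lemma mpr_disc {Val : (ℕ → ℚ) → ℝ}
    (hbdd : ∀ V : Finset ℚ, ∃ m M : ℝ, ∀ x : ℕ → ℚ, (∀ i, x i ∈ V) →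
      m ≤ Val x ∧ Val x ≤ M)
    (hsafe : SafeVal Val) (hcosafe : CosafeVal Val) : DiscountingVal Val := by
  intro V ε hε
  by_contra hcon
  push_neg at hcon
  choose z hzlen hzmem y y' hy hy' hbad using hcon
  obtain ⟨m, M, hmM⟩ := hbdd V
  set xs : ℕ → ℕ → ℚ := fun n => seqCat (z n) (y n) with hxs_def
  have hxs : ∀ n i, xs n i ∈ V := fun n => seqCat_mem (hzmem n) (hy n)
  -- ultrafilter extending cofinite
  let U : Ultrafilter ℕ := Ultrafilter.of Filter.cofinite
  have hU : (U : Filter ℕ) ≤ Filter.cofinite := Ultrafilter.of_le _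
  have hcol : ∀ i, ∃ q ∈ V, {n | xs n i = q} ∈ U := by
    intro i
    by_contra hc
    push_neg at hc
    have hcompl : ∀ q ∈ V, {n | xs n i = q}ᶜ ∈ U :=
      fun q hq => Ultrafilter.compl_mem_iff_notMem.2 (hc q hq)
    have hmem : (⋂ q ∈ (V : Set ℚ), {n | xs n i = q}ᶜ) ∈ U :=
      (Filter.biInter_mem V.finite_toSet).2 fun q hq => hcompl q hq
    obtain ⟨n, hn⟩ := Filter.nonempty_of_mem (f := (U : Filter ℕ)) hmem
    simp only [Set.mem_iInter, Set.mem_compl_iff, Set.mem_setOf_eq] at hn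
    exact hn _ (hxs n i) rfl
  choose xf hxfV hxfU using hcol
  -- prefix agreement along the ultrafilter
  have key : ∀ k : ℕ, ∃ n, k ≤ n ∧ ∀ i < k, xs n i = xf i := by
    intro k
    have h1 : (⋂ i ∈ Set.Iio k, {n | xs n i = xf i}) ∈ U :=
      (Filter.biInter_mem (Set.finite_Iio k)).2 fun i _ => hxfU i
    have h2 : {n | k ≤ n} ∈ (U : Filter ℕ) := by
      apply hU
      rw [Filter.mem_cofinite]
      have : {n : ℕ | k ≤ n}ᶜ = {n | n < k} := by ext n; simp
      rw [this]
      exact Set.finite_Iio k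
    obtain ⟨n, hn⟩ := Filter.nonempty_of_mem (f := (U : Filter ℕ))
      (Filter.inter_mem h2 h1)
    refine ⟨n, hn.1, fun i hi => ?_⟩
    have := hn.2
    simp only [Set.mem_iInter, Set.mem_setOf_eq] at this
    exact this i hi
  -- apply safety and co-safety at the limit point xf
  obtain ⟨n1, hn1⟩ := hsafe V xf hxfV (Val xf + ε / 2) (by linarith)
  obtain ⟨n2, hn2⟩ := hcosafe V xf hxfV (Val xf - ε / 2) (by linarith)
  set k := max n1 n2 with hk_def
  have hpreV : ∀ j : ℕ, ∀ q ∈ seqPre xf j, q ∈ V := by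
    intro j q hq; obtain ⟨i, hi⟩ := seqPre_mem hq; exact hi ▸ hxfV i
  -- every continuation of the length-k prefix of xf has value within ε/2 of Val xf
  have hclose : ∀ w : ℕ → ℚ, (∀ i, w i ∈ V) →
      Val xf - ε / 2 < Val (seqCat (seqPre xf k) w) ∧
      Val (seqCat (seqPre xf k) w) < Val xf + ε / 2 := by
    intro w hw
    constructor
    · -- lower bound via n2
      have hsplit : seqCat (seqPre xf k) w =
          seqCat (seqPre xf n2) (seqCat ((seqPre xf k).drop n2) w) := by
        rw [← take_seqPre xf (le_max_right n1 n2),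
          ← seqCat_split _ (by simp [hk_def]) w]
      have hw2 : ∀ i, seqCat ((seqPre xf k).drop n2) w i ∈ V :=
        seqCat_mem (fun q hq => hpreV k q (List.mem_of_mem_drop hq)) hw
      have hmem2 : Val (seqCat (seqPre xf k) w) ∈ {r : ℝ | ∃ yy : ℕ → ℚ,
          (∀ i, yy i ∈ V) ∧ r = Val (seqCat (seqPre xf n2) yy)} :=
        ⟨_, hw2, by rw [hsplit]⟩
      have hbb : BddBelow {r : ℝ | ∃ yy : ℕ → ℚ,
          (∀ i, yy i ∈ V) ∧ r = Val (seqCat (seqPre xf n2) yy)} := by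
        refine ⟨m, ?_⟩
        rintro r ⟨yy, hyy, rfl⟩
        exact (hmM _ (seqCat_mem (hpreV n2) hyy)).1
      calc Val xf - ε / 2 < sInf _ := hn2
        _ ≤ _ := csInf_le hbb hmem2
    · -- upper bound via n1
      have hsplit : seqCat (seqPre xf k) w =
          seqCat (seqPre xf n1) (seqCat ((seqPre xf k).drop n1) w) := by
        rw [← take_seqPre xf (le_max_left n1 n2),
          ← seqCat_split _ (by simp [hk_def]) w]
      have hw1 : ∀ i, seqCat ((seqPre xf k).drop n1) w i ∈ V :=
        seqCat_mem (fun q hq => hpreV k q (List.mem_of_mem_drop hq)) hw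
      have hmem1 : Val (seqCat (seqPre xf k) w) ∈ {r : ℝ | ∃ yy : ℕ → ℚ,
          (∀ i, yy i ∈ V) ∧ r = Val (seqCat (seqPre xf n1) yy)} :=
        ⟨_, hw1, by rw [hsplit]⟩
      have hba : BddAbove {r : ℝ | ∃ yy : ℕ → ℚ,
          (∀ i, yy i ∈ V) ∧ r = Val (seqCat (seqPre xf n1) yy)} := by
        refine ⟨M, ?_⟩
        rintro r ⟨yy, hyy, rfl⟩
        exact (hmM _ (seqCat_mem (hpreV n1) hyy)).2
      calc Val (seqCat (seqPre xf k) w) ≤ sSup _ := le_csSup hba hmem1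
        _ < Val xf + ε / 2 := hn1
  -- get a bad witness whose prefix of length k agrees with xf
  obtain ⟨n, hkn, hagree⟩ := key k
  have hzkn : k ≤ (z n).length := by rw [hzlen n]; exact hkn
  have htake : (z n).take k = seqPre xf k := by
    apply List.ext_getElem
    · simp [hzlen n]; omega
    · intro i h1 h2
      rw [List.getElem_take, seqPre_getElem]
      have hik : i < k := by simpa using h2
      have := hagree i hik
      rw [hxs_def] at this
      simp only at this
      rw [seqCat_lt _ _ (by omega : i < (z n).length)] at this
      exact this
  have hsplit1 : seqCat (z n) (y n) =
      seqCat (seqPre xf k) (seqCat ((z n).drop k) (y n)) := by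
    rw [← htake, ← seqCat_split _ hzkn]
  have hsplit2 : seqCat (z n) (y' n) =
      seqCat (seqPre xf k) (seqCat ((z n).drop k) (y' n)) := by
    rw [← htake, ← seqCat_split _ hzkn]
  have hdropV : ∀ q ∈ (z n).drop k, q ∈ V :=
    fun q hq => hzmem n q (List.mem_of_mem_drop hq)
  have h1 := hclose (seqCat ((z n).drop k) (y n)) (seqCat_mem hdropV (hy n))
  have h2 := hclose (seqCat ((z n).drop k) (y' n)) (seqCat_mem hdropV (hy' n))
  rw [← hsplit1] at h1
  rw [← hsplit2] at h2
  have hb := hbad n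
  have h3 : |Val (seqCat (z n) (y n)) - Val (seqCat (z n) (y' n))| < ε :=
    abs_sub_lt_iff.2 ⟨by linarith [h1.2, h2.1], by linarith [h1.1, h2.2]⟩
  linarith

/-- A value function (bounded on sequences over every finite set of rationals)
is discounting iff it is both safe and co-safe. -/
theorem discounting_iff_safe_and_cosafe (Val : (ℕ → ℚ) → ℝ)
    (hbdd : ∀ V : Finset ℚ, ∃ m M : ℝ, ∀ x : ℕ → ℚ, (∀ i, x i ∈ V) →
      m ≤ Val x ∧ Val x ≤ M) :
    DiscountingVal Val ↔ (SafeVal Val ∧ CosafeVal Val) := by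
  constructor
  · intro hd
    exact ⟨mp_safe hd, mp_cosafe hd⟩
  · rintro ⟨hs, hc⟩
    exact mpr_disc hbdd hs hc
end

section
/- There exists a quantitative property that is both safe and co-safe but neither sup-closed nor inf-closed: over Σ = {a,b} and the four-element lattice D = {⊥, x, y, ⊤} with incomparable middle elements x, y, the property Φ(w) = x if w starts with a and Φ(w) = y if w starts with b is safe and co-safe, but fails sup-closedness and inf-closedness (e.g., at the empty prefix, sup over all words is ⊤ yet no word attains ⊤). -/
/-- Co-safety over a complete lattice. -/
def QuantCosafe {A D : Type*} [CompleteLattice D] (Φ : (ℕ → A) → D) : Prop :=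
  ∀ (w : ℕ → A) (v : D), ¬ Φ w ≤ v →
    ∃ n : ℕ, ¬ (⨅ w' : ℕ → A, Φ (wordCat (wordPre w n) w')) ≤ v

/-- Inf-closedness. -/
def InfClosedProp {A D : Type*} [CompleteLattice D] (Φ : (ℕ → A) → D) : Prop :=
  ∀ u : List A, ∃ w : ℕ → A, Φ (wordCat u w) = ⨅ w' : ℕ → A, Φ (wordCat u w')

/-- The four-element lattice `{⊥, x, y, ⊤}` with incomparable middle elements
is realized as `Prop × Prop`, with `x = (True, False)` and `y = (False, True)`.
The property mapping words starting with `a` (here `true`) to `x` and words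
starting with `b` (here `false`) to `y`. -/
def Phi17 : (ℕ → Bool) → Prop × Prop :=
  fun w => if w 0 = true then (True, False) else (False, True)


lemma phi17_eq (w v : ℕ → Bool) (h : w 0 = v 0) : Phi17 w = Phi17 v := by
  simp [Phi17, h]

lemma cat_one (w w' : ℕ → Bool) : wordCat (wordPre w 1) w' 0 = w 0 := by
  simp [wordCat, wordPre]

lemma cat_nil (w : ℕ → Bool) : wordCat ([] : List Bool) w = w := by
  funext i; simp [wordCat]

lemma phi17_cases (w : ℕ → Bool) :
    Phi17 w = ((True : Prop), (False : Prop)) ∨ Phi17 w = ((False : Prop), (True : Prop)) := by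
  by_cases h : w 0 = true <;> simp [Phi17, h]

/-- There is a property that is both safe and co-safe but neither sup-closed
nor inf-closed. -/
theorem safe_cosafe_not_supClosed_not_infClosed :
    QuantSafe Phi17 ∧ QuantCosafe Phi17 ∧
      ¬ SupClosedProp Phi17 ∧ ¬ InfClosedProp Phi17 := by
  have hsup1 : ∀ w : ℕ → Bool,
      (⨆ w' : ℕ → Bool, Phi17 (wordCat (wordPre w 1) w')) = Phi17 w := by
    intro w
    apply le_antisymm
    · exact iSup_le fun w' => le_of_eq (phi17_eq _ _ (cat_one w w'))
    · exact (le_of_eq (phi17_eq w _ (cat_one w w).symm)).trans (le_iSup (fun w' => Phi17 (wordCat (wordPre w 1) w')) w)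
  have hinf1 : ∀ w : ℕ → Bool,
      (⨅ w' : ℕ → Bool, Phi17 (wordCat (wordPre w 1) w')) = Phi17 w := by
    intro w
    apply le_antisymm
    · exact (iInf_le _ w).trans (le_of_eq (phi17_eq _ _ (cat_one w w)))
    · exact le_iInf fun w' => le_of_eq (phi17_eq w _ (cat_one w w').symm)
  refine ⟨?_, ?_, ?_, ?_⟩
  · intro w v hv
    exact ⟨1, by rwa [hsup1]⟩
  · intro w v hv
    exact ⟨1, by rwa [hinf1]⟩
  · intro h
    obtain ⟨w, hw⟩ := h []
    have htop : (⨆ w' : ℕ → Bool, Phi17 (wordCat [] w')) = ⊤ := by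
      apply le_antisymm le_top
      have h1 : Phi17 (wordCat [] (fun _ => true)) ≤ _ := le_iSup (fun w' => Phi17 (wordCat [] w')) (fun _ => true)
      have h2 : Phi17 (wordCat [] (fun _ => false)) ≤ _ := le_iSup (fun w' => Phi17 (wordCat [] w')) (fun _ => false)
      simp only [cat_nil, Phi17] at h1 h2
      simp at h1 h2
      constructor
      · exact fun _ => h1.1 trivial
      · exact fun _ => h2.2 trivial
    rw [htop] at hw
    rcases phi17_cases (wordCat [] w) with h | h <;> rw [h] at hw <;>
      · have := congrArg (fun p : Prop × Prop => p.1 ∧ p.2) hw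
        simp [Prod.ext_iff] at hw
  · intro h
    obtain ⟨w, hw⟩ := h []
    have hbot : (⨅ w' : ℕ → Bool, Phi17 (wordCat [] w')) = ⊥ := by
      apply le_antisymm _ bot_le
      have h1 : _ ≤ Phi17 (wordCat [] (fun _ => true)) := iInf_le (fun w' => Phi17 (wordCat [] w')) (fun _ => true)
      have h2 : _ ≤ Phi17 (wordCat [] (fun _ => false)) := iInf_le (fun w' => Phi17 (wordCat [] w')) (fun _ => false)
      simp only [cat_nil, Phi17] at h1 h2
      simp at h1 h2
      constructor
      · exact fun hh => h2.1 hh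
      · exact fun hh => h1.2 hh
    rw [hbot] at hw
    rcases phi17_cases (wordCat [] w) with h | h <;> rw [h] at hw <;>
      · simp [Prod.ext_iff] at hw
end

section
/- There is a top-live property that is not threshold live: over Σ = {a,b}, define Φ(w) = number of a's in w (a natural number) if w contains finitely many a's, and Φ(w) = 0 otherwise, with values in ℕ ∪ {∞}. Then for every finite word u, sup_{w ∈ Σ^ω} Φ(u·w) = ∞ (so Φ is top live), but the set {w | Φ(w) ≥ ∞} is empty and hence not dense in Σ^ω. -/
open scoped Classical

/-- Over `Σ = {a, b}` (with `a = true`), the property mapping a word with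
finitely many `a`'s to the number of its `a`'s (in `ℕ∞`), and words with
infinitely many `a`'s to `0`. -/
noncomputable def Phi18 : (ℕ → Bool) → ℕ∞ := fun w =>
  if h : {i : ℕ | w i = true}.Finite then (h.toFinset.card : ℕ∞) else 0

lemma phi18_ne_top (w : ℕ → Bool) : Phi18 w ≠ ⊤ := by
  unfold Phi18
  split
  · exact (ENat.coe_ne_top _)
  · simp

lemma phi18_ge (u : List Bool) (n : ℕ) :
    (n : ℕ∞) ≤ Phi18 (wordCat u (fun i => decide (i < n))) := by
  set W : ℕ → Bool := fun i => decide (i < n) with hW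
  have hsub : {i : ℕ | wordCat u W i = true} ⊆ Set.Iio (u.length + n) := by
    intro i hi
    simp only [Set.mem_setOf_eq, wordCat] at hi
    by_contra hlt
    simp only [Set.mem_Iio, not_lt] at hlt
    rw [dif_neg (by omega)] at hi
    simp only [hW, decide_eq_true_eq] at hi
    omega
  have hfin : {i : ℕ | wordCat u W i = true}.Finite :=
    (Set.finite_Iio _).subset hsub
  have hsup : Finset.Ico u.length (u.length + n) ⊆ hfin.toFinset := by
    intro i hi
    simp only [Finset.mem_Ico] at hi
    simp only [Set.Finite.mem_toFinset, Set.mem_setOf_eq, wordCat]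
    rw [dif_neg (by omega)]
    simp only [hW, decide_eq_true_eq]
    omega
  have hcard : n ≤ hfin.toFinset.card := by
    have := Finset.card_le_card hsup
    simpa using this
  unfold Phi18
  rw [dif_pos hfin]
  exact_mod_cast hcard

/-- `Phi18` is top live (every finite word has continuations of unbounded
value, so the safety closure is constantly `∞`), yet the set of words with
value at least `∞` is empty and hence not dense: a top-live property that is
not threshold live. -/
theorem topLive_not_thresholdLive :
    (∀ u : List Bool, (⨆ w : ℕ → Bool, Phi18 (wordCat u w)) = ⊤) ∧
    (∀ w : ℕ → Bool, SafetyClosure Phi18 w = ⊤) ∧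
    {w : ℕ → Bool | (⊤ : ℕ∞) ≤ Phi18 w} = ∅ ∧
    ¬ Dense {w : ℕ → Bool | (⊤ : ℕ∞) ≤ Phi18 w} := by
  have hkey : ∀ x : ℕ∞, (∀ n : ℕ, (n : ℕ∞) ≤ x) → x = ⊤ := by
    intro x hx
    cases x with
    | top => rfl
    | coe m =>
      have := hx (m + 1)
      rw [Nat.cast_le] at this
      omega
  have h1 : ∀ u : List Bool, (⨆ w : ℕ → Bool, Phi18 (wordCat u w)) = ⊤ := by
    intro u
    refine hkey _ fun n => ?_
    exact le_trans (phi18_ge u n) (le_iSup (fun w => Phi18 (wordCat u w)) _)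
  have h3 : {w : ℕ → Bool | (⊤ : ℕ∞) ≤ Phi18 w} = ∅ := by
    ext w
    simp only [Set.mem_setOf_eq, Set.mem_empty_iff_false, iff_false, top_le_iff]
    exact phi18_ne_top w
  refine ⟨h1, fun w => ?_, h3, ?_⟩
  · unfold SafetyClosure
    simp [h1]
  · intro hd
    rw [h3] at hd
    exact Set.not_nonempty_empty hd.nonempty
end
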